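/- If c ∈ ℂ satisfies Re(c) > 0 and Im(c) ≠ 0, then every eigenvalue λ_n := c^{1/2}(2n+1) of H_c (n = 0, 1, 2, …) lies in the topological interior of the set W := {t₁ + c·t₂ ∈ ℂ : t₁, t₂ ≥ 0, t₁·t₂ ≥ 1/4}, i.e. the spectrum of H_c is contained in the interior of its numerical range. -/

import Mathlib

open Complex

/-!
Since `Im c ≠ 0`, the real-linear map `(t₁, t₂) ↦ t₁ + c t₂` is an isomorphism `ℝ² ≃ ℂ`, hence
open, so it sends `{t₁, t₂ > 0, t₁ t₂ > 1/4}` into the interior of `W`. For `s = c^{1/2}` we have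
`Re s > 0`, `Im s ≠ 0`, and for real `m` the exact decomposition `s m = t₁ + s² t₂` with
`t₁ = m |s|² / (2 Re s)`, `t₂ = m / (2 Re s)`; then `t₁ t₂ = m² |s|² / (4 (Re s)²) > 1/4`
once `m = 2n + 1 ≥ 1`.
-/

def quadrantHyperbola : Set (ℝ × ℝ) := {t | 0 ≤ t.1 ∧ 0 ≤ t.2 ∧ 1 / 4 ≤ t.1 * t.2}

lemma mem_interior_quadrantHyperbola {t : ℝ × ℝ} (h₁ : 0 < t.1) (h₂ : 0 < t.2)
    (h : 1 / 4 < t.1 * t.2) : t ∈ interior quadrantHyperbola := by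
  have hopen : IsOpen {t : ℝ × ℝ | 0 < t.1 ∧ 0 < t.2 ∧ 1 / 4 < t.1 * t.2} :=
    (isOpen_lt continuous_const continuous_fst).inter <|
      (isOpen_lt continuous_const continuous_snd).inter
        (isOpen_lt continuous_const (continuous_fst.mul continuous_snd))
  refine interior_maximal (fun t ht => ?_) hopen ⟨h₁, h₂, h⟩
  exact ⟨ht.1.le, ht.2.1.le, ht.2.2.le⟩

namespace Complex

noncomputable def realCombination (c : ℂ) : ℝ × ℝ →ₗ[ℝ] ℂ :=
  (LinearMap.toSpanSingleton ℝ ℂ 1).coprod (LinearMap.toSpanSingleton ℝ ℂ c)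

@[simp]
lemma realCombination_apply (c : ℂ) (t : ℝ × ℝ) : realCombination c t = t.1 + c * t.2 := by
  simp [realCombination, mul_comm c]

lemma realCombination_injective {c : ℂ} (hc : c.im ≠ 0) :
    Function.Injective (realCombination c) := by
  refine (injective_iff_map_eq_zero _).2 fun t ht => ?_
  rw [realCombination_apply] at ht
  have h₂ : t.2 = 0 := by
    simpa [hc] using congrArg im ht
  have h₁ : t.1 = 0 := by
    simpa [h₂] using congrArg re ht
  exact Prod.ext h₁ h₂

lemma realCombination_isOpenMap {c : ℂ} (hc : c.im ≠ 0) : IsOpenMap (realCombination c) := by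
  have hrank : Module.finrank ℝ (ℝ × ℝ) = Module.finrank ℝ ℂ := by
    simp [Module.finrank_prod, finrank_real_complex]
  exact (realCombination c).isOpenMap_of_finiteDimensional <|
    (LinearMap.injective_iff_surjective_of_finrank_eq_finrank hrank).1
      (realCombination_injective hc)

lemma image_realCombination_quadrantHyperbola (c : ℂ) :
    realCombination c '' quadrantHyperbola = {z : ℂ | ∃ t₁ t₂ : ℝ, 0 ≤ t₁ ∧ 0 ≤ t₂ ∧
      1 / 4 ≤ t₁ * t₂ ∧ z = (t₁ : ℂ) + c * (t₂ : ℂ)} := by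
  ext z
  simp only [Set.mem_image, Set.mem_ofPred_eq, quadrantHyperbola, realCombination_apply,
    Prod.exists]
  constructor
  · rintro ⟨t₁, t₂, ⟨h₁, h₂, h⟩, rfl⟩
    exact ⟨t₁, t₂, h₁, h₂, h, rfl⟩
  · rintro ⟨t₁, t₂, h₁, h₂, h, rfl⟩
    exact ⟨t₁, t₂, ⟨h₁, h₂, h⟩, rfl⟩

lemma ofReal_add_mul_ofReal_mem_interior {c : ℂ} (hc : c.im ≠ 0) {t₁ t₂ : ℝ}
    (h₁ : 0 < t₁) (h₂ : 0 < t₂) (h : 1 / 4 < t₁ * t₂) :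
    (t₁ : ℂ) + c * t₂ ∈ interior {z : ℂ | ∃ t₁ t₂ : ℝ, 0 ≤ t₁ ∧ 0 ≤ t₂ ∧
      1 / 4 ≤ t₁ * t₂ ∧ z = (t₁ : ℂ) + c * (t₂ : ℂ)} := by
  rw [← image_realCombination_quadrantHyperbola]
  refine (realCombination_isOpenMap hc).image_interior_subset _ ⟨(t₁, t₂), ?_, ?_⟩
  · exact mem_interior_quadrantHyperbola h₁ h₂ h
  · simp

lemma re_cpow_one_div_two_pos {c : ℂ} (hc : 0 < c.re) : 0 < (c ^ ((1 : ℂ) / 2)).re := by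
  rw [one_div, cpow_inv_two_re]
  exact Real.sqrt_pos.2 (by linarith [c.re_le_norm])

lemma mul_ofReal_eq_add_sq_mul {s : ℂ} (hs : s.re ≠ 0) (m : ℝ) :
    s * m = ((m * normSq s / (2 * s.re) : ℝ) : ℂ) + s ^ 2 * ((m / (2 * s.re) : ℝ) : ℂ) := by
  apply Complex.ext <;>
    simp only [add_re, add_im, mul_re, mul_im, ofReal_re, ofReal_im, sq, normSq_apply] <;>
    field_simp <;> ring

lemma mul_ofReal_mem_interior {s : ℂ} (ha : 0 < s.re) (hb : s.im ≠ 0) {m : ℝ} (hm : 1 ≤ m) :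
    s * m ∈ interior {z : ℂ | ∃ t₁ t₂ : ℝ, 0 ≤ t₁ ∧ 0 ≤ t₂ ∧
      1 / 4 ≤ t₁ * t₂ ∧ z = (t₁ : ℂ) + s ^ 2 * (t₂ : ℂ)} := by
  have hre_lt : s.re * s.re < normSq s := by
    rw [normSq_apply]
    linarith [mul_self_pos.2 hb]
  have hnormSq : 0 < normSq s := (mul_self_pos.2 ha.ne').trans hre_lt
  have hprod : 1 / 4 < m * normSq s / (2 * s.re) * (m / (2 * s.re)) := by
    rw [div_mul_div_comm, lt_div_iff₀ (by positivity)]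
    calc 1 / 4 * (2 * s.re * (2 * s.re)) = s.re * s.re := by ring
      _ < normSq s := hre_lt
      _ = 1 * normSq s * 1 := by ring
      _ ≤ m * normSq s * m := by gcongr
  have hb₂ : (s ^ 2).im ≠ 0 := by
    simpa [sq, mul_im, mul_comm s.im] using mul_ne_zero (mul_ne_zero two_ne_zero ha.ne') hb
  have hm₀ : 0 < m := by linarith
  rw [mul_ofReal_eq_add_sq_mul ha.ne' m]
  exact ofReal_add_mul_ofReal_mem_interior hb₂ (by positivity) (by positivity) hprod

end Complex

theorem eigenvalue_mem_interior_numericalRange (c : ℂ) (hre : 0 < c.re)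
    (him : c.im ≠ 0) (n : ℕ) :
    c ^ ((1 : ℂ) / 2) * (2 * (n : ℂ) + 1) ∈
      interior {z : ℂ | ∃ t₁ t₂ : ℝ, 0 ≤ t₁ ∧ 0 ≤ t₂ ∧ 1 / 4 ≤ t₁ * t₂ ∧
        z = (t₁ : ℂ) + c * (t₂ : ℂ)} := by
  set s := c ^ ((1 : ℂ) / 2)
  have hs : s ^ 2 = c := by simp [s]
  have hb : s.im ≠ 0 := by
    intro hb
    simp [← hs, sq, hb] at him
  rw [← hs, show (2 * (n : ℂ) + 1) = ((2 * n + 1 : ℝ) : ℂ) by push_cast; ring]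
  exact mul_ofReal_mem_interior (re_cpow_one_div_two_pos hre) hb (by simp)
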